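/- Consider the two-state Markov chain with states q₀ and q₁ and transition function δ given by δ(q₁)(q₁) = δ(q₁)(q₀) = 1/2 and δ(q₀)(q₀) = 1, and weight function w with w(q₁,q₁) = −1, w(q₁,q₀) = 0, w(q₀,q₀) = 0. Then for every initial credit c₀ ∈ ℕ, the probability starting from q₁ of the event PosEnergy(c₀) equals 1 − 2^{−(c₀+1)}; in particular the energy level drops below 0 with probability exactly 2^{−(c₀+1)}. -/

import Mathlib

open MeasureTheory Filter
open scoped Classical ENNReal

namespace MPP

variable {Q : Type}

/-- Probability that a Markov chain with transition function `κ` traverses the finite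
sequence `future` starting from `q`. -/
noncomputable def chainPathProb (κ : Q → PMF Q) : Q → List Q → ℝ≥0∞
  | _, [] => 1
  | q, q' :: rest => κ q q' * chainPathProb κ q' rest

/-- `μ` is the trajectory measure (Ionescu–Tulcea) of the Markov chain `κ` started at
`q`: it is the (unique) probability measure on `ℕ → Q` (product σ-algebra) giving
every cylinder its product probability. -/
def IsChainTrajMeasure [MeasurableSpace Q] (κ : Q → PMF Q) (q : Q)
    (μ : Measure (ℕ → Q)) : Prop :=
  IsProbabilityMeasure μ ∧
    ∀ (n : ℕ) (f : ℕ → Q),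
      μ {ρ | ∀ i ≤ n, ρ i = f i} =
        if f 0 = q then chainPathProb κ q ((List.range n).map fun i => f (i + 1)) else 0

/-- Energy level of the length-`n` prefix of a play. -/
def EL (w : Q → Q → ℤ) (ρ : ℕ → Q) (n : ℕ) : ℤ :=
  ∑ i ∈ Finset.range n, w (ρ i) (ρ (i + 1))

/-- Energy objective with initial credit `c₀`. -/
def PosEnergy (w : Q → Q → ℤ) (c₀ : ℕ) : Set (ℕ → Q) :=
  {ρ | ∀ n, 0 ≤ (c₀ : ℤ) + EL w ρ n}

/-- A closed recurrent set of a Markov chain: nonempty, closed under transitions, and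
strongly connected via positive-probability transitions. -/
def IsClosedRecurrent (κ : Q → PMF Q) (U : Set Q) : Prop :=
  U.Nonempty ∧ (∀ q ∈ U, (κ q).support ⊆ U) ∧
    ∀ q ∈ U, ∀ q' ∈ U,
      Relation.ReflTransGen (fun a b => a ∈ U ∧ b ∈ U ∧ κ a b ≠ 0) q q'

/-!
Almost every play only takes transitions of positive probability, so it never returns from
`q₀ = false` to `q₁ = true`: as a `Bool`-valued sequence it is antitone. Along an antitone
play the energy drops by one exactly at the steps that stay in `q₁`, so the credit `c₀` is
exhausted iff the play stays in `q₁` for its first `c₀ + 1` steps, a cylinder of probability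
`2^{-(c₀+1)}`.
-/

open Finset

theorem chainPathProb_map_range (κ : Q → PMF Q) (n : ℕ) (f : ℕ → Q) :
    chainPathProb κ (f 0) ((List.range n).map fun i => f (i + 1)) =
      ∏ i ∈ range n, κ (f i) (f (i + 1)) := by
  induction n generalizing f with
  | zero => rfl
  | succ n ih =>
    rw [List.range_succ_eq_map, List.map_cons, List.map_map, prod_range_succ', mul_comm]
    exact congrArg (κ (f 0) (f 1) * ·) (ih fun j => f (j + 1))

namespace IsChainTrajMeasure

variable [MeasurableSpace Q] {κ : Q → PMF Q} {q : Q} {μ : Measure (ℕ → Q)}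

theorem measure_cylinder (hμ : IsChainTrajMeasure κ q μ) (n : ℕ) (f : ℕ → Q) :
    μ {ρ | ∀ i ≤ n, ρ i = f i} =
      if f 0 = q then ∏ i ∈ range n, κ (f i) (f (i + 1)) else 0 := by
  rw [hμ.2 n f]
  split_ifs with h
  · rw [← h, chainPathProb_map_range]
  · rfl

theorem ae_transition_ne_zero [Countable Q] (hμ : IsChainTrajMeasure κ q μ) :
    ∀ᵐ ρ ∂μ, ∀ i, κ (ρ i) (ρ (i + 1)) ≠ 0 := by
  refine ae_all_iff.2 fun i => ae_iff.2 ?_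
  simp only [ne_eq, not_not]
  -- the event is a countable union of null cylinders of length `i + 1`
  let extend (g : Fin (i + 2) → Q) (j : ℕ) : Q := if h : j < i + 2 then g ⟨j, h⟩ else g 0
  refine measure_mono_null (t := ⋃ g : {g // κ (extend g i) (extend g (i + 1)) = 0},
    {ρ | ∀ j ≤ i + 1, ρ j = extend g j}) ?_ (measure_iUnion_null fun g => ?_)
  · intro ρ hρ
    refine Set.mem_iUnion.2 ⟨⟨fun j => ρ j, by simpa [extend] using hρ⟩, fun j hj => ?_⟩
    simp [extend, show j < i + 2 by omega]
  · rw [hμ.measure_cylinder]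
    split_ifs
    · exact prod_eq_zero (self_mem_range_succ i) g.2
    · rfl

end IsChainTrajMeasure

theorem ae_antitone_of_false_true_eq_zero {κ : Bool → PMF Bool} {μ : Measure (ℕ → Bool)}
    {q : Bool} (hμ : IsChainTrajMeasure κ q μ) (hκ : κ false true = 0) :
    ∀ᵐ ρ ∂μ, Antitone ρ := by
  filter_upwards [hμ.ae_transition_ne_zero] with ρ hρ
  refine antitone_nat_of_succ_le fun i => ?_
  cases h : ρ i
  · cases h' : ρ (i + 1)
    · rfl
    · exact absurd hκ (h ▸ h' ▸ hρ i)
  · exact le_top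

section EnergyOfAntitonePlay

variable {w : Bool → Bool → ℤ} {ρ : ℕ → Bool}

theorem EL_eq_neg_card_of_antitone (hw₁ : w true true = -1) (hw₀ : ∀ b, w b false = 0)
    (hρ : Antitone ρ) (n : ℕ) :
    EL w ρ n = -#{i ∈ range n | ρ (i + 1) = true} := by
  have step (i : ℕ) : w (ρ i) (ρ (i + 1)) = if ρ (i + 1) = true then -1 else 0 := by
    split_ifs with h
    · rw [h, show ρ i = true from eq_top_mono (hρ i.le_succ) h, hw₁]
    · rw [Bool.not_eq_true] at h
      rw [h, hw₀]
  simp only [EL, step, sum_ite, sum_const_zero, sum_const, add_zero, smul_neg, nsmul_one]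

theorem exists_EL_lt_neg_iff_of_antitone (hw₁ : w true true = -1) (hw₀ : ∀ b, w b false = 0)
    (hρ : Antitone ρ) (c₀ : ℕ) :
    (∃ n, (c₀ : ℤ) + EL w ρ n < 0) ↔ ∀ i ≤ c₀ + 1, ρ i = true := by
  simp only [EL_eq_neg_card_of_antitone hw₁ hw₀ hρ]
  constructor
  · rintro ⟨n, hn⟩ i hi
    by_contra hfalse
    have : #{i ∈ range n | ρ (i + 1) = true} ≤ c₀ := by
      refine (card_le_card fun j hj => ?_).trans (card_range c₀).le
      simp only [mem_filter, mem_range] at hj ⊢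
      by_contra! hcj
      exact hfalse (eq_top_mono (hρ (by omega : i ≤ j + 1)) hj.2)
    omega
  · intro htrue
    refine ⟨c₀ + 1, ?_⟩
    rw [filter_true_of_mem fun i hi => htrue (i + 1) (by simp at hi; omega), card_range]
    omega

end EnergyOfAntitonePlay

theorem two_state_chain_energy :
    ∀ (κ : Bool → PMF Bool) (w : Bool → Bool → ℤ),
      κ true true = 1 / 2 → κ true false = 1 / 2 → κ false false = 1 →
      w true true = -1 → w true false = 0 → w false false = 0 →
      ∀ (c₀ : ℕ) (μ : Measure (ℕ → Bool)), IsChainTrajMeasure κ true μ →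
        μ (PosEnergy w c₀) = 1 - (1 / 2 : ℝ≥0∞) ^ (c₀ + 1) ∧
          μ {ρ | ∃ n, (c₀ : ℤ) + EL w ρ n < 0} = (1 / 2 : ℝ≥0∞) ^ (c₀ + 1) := by
  intro κ w hκ₁₁ _ hκ₀₀ hw₁₁ hw₁₀ hw₀₀ c₀ μ hμ
  have : IsProbabilityMeasure μ := hμ.1
  have hκ₀₁ : κ false true = 0 := by
    rw [PMF.apply_eq_zero_iff, (PMF.apply_eq_one_iff _ _).1 hκ₀₀]
    simp
  have hw₀ : ∀ b, w b false = 0 := by rintro (_ | _) <;> assumption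
  set C := {ρ : ℕ → Bool | ∀ i ≤ c₀ + 1, ρ i = true}
  have hC : μ C = (1 / 2) ^ (c₀ + 1) := by simp [C, hμ.measure_cylinder, hκ₁₁]
  have hC_meas : MeasurableSet C := by
    simp only [C, Set.ofPred_forall]
    exact .iInter fun i => .iInter fun _ =>
      measurableSet_eq_fun (measurable_pi_apply i) measurable_const
  have hbad : {ρ | ∃ n, (c₀ : ℤ) + EL w ρ n < 0} =ᵐ[μ] C := by
    filter_upwards [ae_antitone_of_false_true_eq_zero hμ hκ₀₁] with ρ hρ
    exact propext (exists_EL_lt_neg_iff_of_antitone hw₁₁ hw₀ hρ c₀)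
  have hpos : PosEnergy w c₀ = {ρ | ∃ n, (c₀ : ℤ) + EL w ρ n < 0}ᶜ := by
    ext ρ
    simp [PosEnergy]
  rw [hpos, measure_congr hbad.compl, measure_congr hbad, prob_compl_eq_one_sub hC_meas, hC]
  exact ⟨rfl, rfl⟩

end MPP
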